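/- Let E be a field of characteristic ≠ 2, L = E(√d) a quadratic extension, D₀ a quaternion division algebra over E with canonical involution τ₀, and D = D₀ ⊗_E L with unitary involution τ = τ₀ ⊗ ι. Let h₀ = ⟨α, −γα⟩ be a rank 2 hermitian form over (D₀, τ₀) with α, γ ∈ E*. If γ ∈ N_{L/E}(L*)·Nrd(D₀*), then the extension ρ̃(h₀) over (D, τ) is isotropic, hence hyperbolic. -/

import Mathlib

open scoped Quaternion

section Defs

variable {E L : Type*} [Field E] [Field L] [Algebra E L] (σ : L ≃ₐ[E] L)
variable {a b : L}

/-- The unitary involution `τ = τ₀ ⊗ ι` on `D = D₀ ⊗_E L = ℍ[L, a, b]`. -/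
def quatUnitaryInv (x : ℍ[L, a, b]) : ℍ[L, a, b] :=
  ⟨σ x.re, -σ x.imI, -σ x.imJ, -σ x.imK⟩

variable (a b)

/-- The diagonal hermitian form `⟨λᵢ⟩ᵢ` (`λᵢ ∈ E`) over `(D, τ)`. -/
def hermDiagTau {n : ℕ} (lam : Fin n → E) (x y : Fin n → ℍ[L, a, b]) :
    ℍ[L, a, b] :=
  ∑ i, quatUnitaryInv σ (x i) *
    algebraMap L ℍ[L, a, b] (algebraMap E L (lam i)) * y i

/-- Isometry of hermitian forms over `(D, τ)`: an `L`-linear, right `D`-linear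
equivalence matching the forms. -/
def HermFormIsoTau {n₁ n₂ : ℕ}
    (h₁ : (Fin n₁ → ℍ[L, a, b]) → (Fin n₁ → ℍ[L, a, b]) → ℍ[L, a, b])
    (h₂ : (Fin n₂ → ℍ[L, a, b]) → (Fin n₂ → ℍ[L, a, b]) → ℍ[L, a, b]) : Prop :=
  ∃ g : (Fin n₁ → ℍ[L, a, b]) ≃ₗ[L] (Fin n₂ → ℍ[L, a, b]),
    (∀ (x : Fin n₁ → ℍ[L, a, b]) (u : ℍ[L, a, b]),
      g (fun i => x i * u) = fun i => g x i * u) ∧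
    (∀ x y, h₂ (g x) (g y) = h₁ x y)

end Defs

/-!
Write `γ = N(z) · Nrd(u)` and put `w = z · u ∈ D`; then `τ(w) w = w τ(w) = γ`. Hence `(w, 1)` is
isotropic for `⟨α, -γα⟩`, and `diag(1, w)` is an isometry `⟨α, -γα⟩ ≅ ⟨α, -α⟩`. Finally
`⟨α, -α⟩ ≅ ⟨1, -1⟩` through the matrix `!![p, q; q, p]` with `p, q = (1 ± α) / 2`, since then
`p² - q² = α` and the cross terms cancel.
-/
section QuatUnitaryInv

variable {E L : Type*} [Field E] [Field L] [Algebra E L] (σ : L ≃ₐ[E] L) {a b : L}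

lemma quatUnitaryInv_one : quatUnitaryInv σ (1 : ℍ[L, a, b]) = 1 := by
  ext <;> simp [quatUnitaryInv]

lemma quatUnitaryInv_add (x y : ℍ[L, a, b]) :
    quatUnitaryInv σ (x + y) = quatUnitaryInv σ x + quatUnitaryInv σ y := by
  ext <;> simp [quatUnitaryInv] <;> ring

lemma quatUnitaryInv_smul (z : L) (x : ℍ[L, a, b]) :
    quatUnitaryInv σ (z • x) = σ z • quatUnitaryInv σ x := by
  ext <;> simp [quatUnitaryInv]

lemma quatUnitaryInv_algebraMap_smul (t : E) (x : ℍ[L, a, b]) :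
    quatUnitaryInv σ (t • x) = t • quatUnitaryInv σ x := by
  rw [← algebraMap_smul L t x, quatUnitaryInv_smul, AlgEquiv.commutes, algebraMap_smul]

lemma quatUnitaryInv_mul (ha : σ a = a) (hb : σ b = b) (x y : ℍ[L, a, b]) :
    quatUnitaryInv σ (x * y) = quatUnitaryInv σ y * quatUnitaryInv σ x := by
  ext <;>
    simp [quatUnitaryInv, QuaternionAlgebra.re_mul, QuaternionAlgebra.imI_mul,
      QuaternionAlgebra.imJ_mul, QuaternionAlgebra.imK_mul, ha, hb] <;> ring

lemma algebraMap_algebraMap_eq_smul_one (t : E) :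
    algebraMap L ℍ[L, a, b] (algebraMap E L t) = t • (1 : ℍ[L, a, b]) := by
  rw [Algebra.algebraMap_eq_smul_one, algebraMap_smul]

variable (a b)

lemma hermDiagTau_two (l₀ l₁ : E) (x y : Fin 2 → ℍ[L, a, b]) :
    hermDiagTau σ a b ![l₀, l₁] x y =
      l₀ • (quatUnitaryInv σ (x 0) * y 0) + l₁ • (quatUnitaryInv σ (x 1) * y 1) := by
  simp only [hermDiagTau, Fin.sum_univ_two, Matrix.cons_val_zero, Matrix.cons_val_one,
    mul_assoc, algebraMap_algebraMap_eq_smul_one, smul_mul_assoc, one_mul, mul_smul_comm]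

end QuatUnitaryInv

section BaseChange

variable {E L : Type*} [Field E] [Field L] [Algebra E L] {qa qb : E}

variable (L) in
def quatBaseChange (u : ℍ[E, qa, qb]) :
    ℍ[L, algebraMap E L qa, algebraMap E L qb] :=
  ⟨algebraMap E L u.re, algebraMap E L u.imI, algebraMap E L u.imJ, algebraMap E L u.imK⟩

lemma quatBaseChange_mul (u v : ℍ[E, qa, qb]) :
    quatBaseChange L (u * v) = quatBaseChange L u * quatBaseChange L v := by
  ext <;> simp [quatBaseChange, QuaternionAlgebra.re_mul, QuaternionAlgebra.imI_mul,
    QuaternionAlgebra.imJ_mul, QuaternionAlgebra.imK_mul]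

lemma quatBaseChange_coe (r : E) :
    quatBaseChange L (r : ℍ[E, qa, qb]) =
      algebraMap L ℍ[L, algebraMap E L qa, algebraMap E L qb] (algebraMap E L r) := by
  ext <;> simp [quatBaseChange, QuaternionAlgebra.coe_algebraMap]

lemma quatUnitaryInv_quatBaseChange (σ : L ≃ₐ[E] L) (u : ℍ[E, qa, qb]) :
    quatUnitaryInv σ (quatBaseChange L u) = quatBaseChange L (star u) := by
  ext <;> simp [quatUnitaryInv, quatBaseChange]

end BaseChange

section NormElement

variable {E L : Type*} [Field E] [Field L] [Algebra E L] (σ : L ≃ₐ[E] L) {qa qb : E}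

lemma smul_quatBaseChange_mul_smul_quatBaseChange (z z' : L) (u : ℍ[E, qa, qb]) :
    (z • quatBaseChange L (star u)) * (z' • quatBaseChange L u) =
      algebraMap L ℍ[L, algebraMap E L qa, algebraMap E L qb]
        (z * z' * algebraMap E L (u * star u).re) := by
  rw [smul_mul_smul_comm, ← quatBaseChange_mul, star_comm_self',
    QuaternionAlgebra.mul_star_eq_coe, QuaternionAlgebra.re_coe, quatBaseChange_coe,
    Algebra.smul_def, map_mul, map_mul, map_mul]

lemma quatUnitaryInv_mul_self_smul_quatBaseChange (z : L) (u : ℍ[E, qa, qb]) :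
    quatUnitaryInv σ (z • quatBaseChange L u) * (z • quatBaseChange L u) =
      algebraMap L ℍ[L, algebraMap E L qa, algebraMap E L qb]
        (σ z * z * algebraMap E L (u * star u).re) := by
  rw [quatUnitaryInv_smul, quatUnitaryInv_quatBaseChange,
    smul_quatBaseChange_mul_smul_quatBaseChange]

lemma smul_quatBaseChange_mul_quatUnitaryInv_self (z : L) (u : ℍ[E, qa, qb]) :
    (z • quatBaseChange L u) * quatUnitaryInv σ (z • quatBaseChange L u) =
      algebraMap L ℍ[L, algebraMap E L qa, algebraMap E L qb]
        (σ z * z * algebraMap E L (u * star u).re) := by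
  rw [quatUnitaryInv_smul, quatUnitaryInv_quatBaseChange, mul_comm (σ z)]
  have h := smul_quatBaseChange_mul_smul_quatBaseChange z (σ z) (star u)
  rwa [star_star, star_comm_self'] at h

end NormElement

section Isometry

open Matrix

variable {L : Type*} [Field L] {a b : L}

lemma HermFormIsoTau.trans {n₁ n₂ n₃ : ℕ}
    {h₁ : (Fin n₁ → ℍ[L, a, b]) → (Fin n₁ → ℍ[L, a, b]) → ℍ[L, a, b]}
    {h₂ : (Fin n₂ → ℍ[L, a, b]) → (Fin n₂ → ℍ[L, a, b]) → ℍ[L, a, b]}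
    {h₃ : (Fin n₃ → ℍ[L, a, b]) → (Fin n₃ → ℍ[L, a, b]) → ℍ[L, a, b]}
    (h₁₂ : HermFormIsoTau a b h₁ h₂) (h₂₃ : HermFormIsoTau a b h₂ h₃) :
    HermFormIsoTau a b h₁ h₃ := by
  obtain ⟨g, hg_right, hg_form⟩ := h₁₂
  obtain ⟨g', hg'_right, hg'_form⟩ := h₂₃
  exact ⟨g.trans g', fun x u => by simp [hg_right, hg'_right],
    fun x y => by simp [hg_form, hg'_form]⟩

lemma HermFormIsoTau.of_mulVec {n : ℕ}
    {h₁ h₂ : (Fin n → ℍ[L, a, b]) → (Fin n → ℍ[L, a, b]) → ℍ[L, a, b]}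
    (M N : Matrix (Fin n) (Fin n) ℍ[L, a, b]) (hMN : M * N = 1) (hNM : N * M = 1)
    (hM : ∀ x y, h₂ (M *ᵥ x) (M *ᵥ y) = h₁ x y) :
    HermFormIsoTau a b h₁ h₂ := by
  refine ⟨⟨⟨⟨M.mulVec, M.mulVec_add⟩, M.mulVec_smul⟩, N.mulVec, fun x => ?_, fun x => ?_⟩,
    fun x u => ?_, hM⟩
  · simp [Matrix.mulVec_mulVec, hNM]
  · simp [Matrix.mulVec_mulVec, hMN]
  · funext i
    simp only [LinearEquiv.coe_mk, LinearMap.coe_mk, AddHom.coe_mk, mulVec, dotProduct,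
      Finset.sum_mul, mul_assoc]

end Isometry

section DiagonalForms

open Matrix

variable {E L : Type*} [Field E] [Field L] [Algebra E L] (σ : L ≃ₐ[E] L) {a b : L}

lemma hermFormIsoTau_of_sq_sub_sq {p q l : E} (hpq : p ^ 2 - q ^ 2 = l) (hl : l ≠ 0) :
    HermFormIsoTau a b (hermDiagTau σ a b ![l, -l]) (hermDiagTau σ a b ![1, -1]) := by
  subst hpq
  refine .of_mulVec ((!![p, q; q, p]).map (algebraMap E ℍ[L, a, b]))
    (((p ^ 2 - q ^ 2)⁻¹ • !![p, -q; -q, p]).map (algebraMap E ℍ[L, a, b])) ?_ ?_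
    fun x y => ?_
  · rw [← Matrix.map_mul, ← Matrix.map_one (algebraMap E ℍ[L, a, b]) (map_zero _) (map_one _)]
    congr 1
    ext i j
    fin_cases i <;> fin_cases j <;> simp <;> field_simp <;> ring
  · rw [← Matrix.map_mul, ← Matrix.map_one (algebraMap E ℍ[L, a, b]) (map_zero _) (map_one _)]
    congr 1
    ext i j
    fin_cases i <;> fin_cases j <;> simp <;> field_simp <;> ring
  · simp only [hermDiagTau_two, mulVec, dotProduct, Fin.sum_univ_two, map_apply, of_apply,
      cons_val', cons_val_zero, cons_val_one, empty_val', cons_val_fin_one,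
      ← Algebra.smul_def, quatUnitaryInv_add, quatUnitaryInv_algebraMap_smul σ, add_mul, mul_add,
      smul_mul_assoc, mul_smul_comm, smul_smul, smul_add]
    match_scalars <;> ring

lemma hermFormIsoTau_neg_self {l : E} (h2 : (2 : E) ≠ 0) (hl : l ≠ 0) :
    HermFormIsoTau a b (hermDiagTau σ a b ![l, -l]) (hermDiagTau σ a b ![1, -1]) :=
  hermFormIsoTau_of_sq_sub_sq σ (p := (1 + l) / 2) (q := (1 - l) / 2)
    (by field_simp; ring) hl

lemma hermDiagTau_isotropic {w : ℍ[L, a, b]} {μ : E}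
    (hw : quatUnitaryInv σ w * w = algebraMap L ℍ[L, a, b] (algebraMap E L μ)) (l : E) :
    hermDiagTau σ a b ![l, -(μ * l)] ![w, 1] ![w, 1] = 0 := by
  simp only [hermDiagTau_two, cons_val_zero, cons_val_one, quatUnitaryInv_one, hw,
    algebraMap_algebraMap_eq_smul_one, smul_smul, mul_one, neg_smul, mul_comm l,
    add_neg_cancel]

lemma hermFormIsoTau_diag_mul (ha : σ a = a) (hb : σ b = b) {w : ℍ[L, a, b]} {μ : E}
    (hμ : μ ≠ 0)
    (hw : quatUnitaryInv σ w * w = algebraMap L ℍ[L, a, b] (algebraMap E L μ))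
    (hw' : w * quatUnitaryInv σ w = algebraMap L ℍ[L, a, b] (algebraMap E L μ))
    (l₀ l₁ : E) :
    HermFormIsoTau a b (hermDiagTau σ a b ![l₀, μ * l₁]) (hermDiagTau σ a b ![l₀, l₁]) := by
  refine .of_mulVec (diagonal ![1, w]) (diagonal ![1, μ⁻¹ • quatUnitaryInv σ w]) ?_ ?_
    fun x y => ?_
  · rw [diagonal_mul_diagonal, ← diagonal_one]
    congr 1
    funext i
    fin_cases i <;> simp [hw', algebraMap_algebraMap_eq_smul_one, smul_smul, hμ]
  · rw [diagonal_mul_diagonal, ← diagonal_one]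
    congr 1
    funext i
    fin_cases i <;> simp [hw, algebraMap_algebraMap_eq_smul_one, smul_smul, hμ]
  · simp only [hermDiagTau_two, mulVec_diagonal, cons_val_zero, cons_val_one,
      one_mul, quatUnitaryInv_mul σ ha hb, mul_assoc]
    rw [← mul_assoc (quatUnitaryInv σ w), hw, algebraMap_algebraMap_eq_smul_one, smul_mul_assoc,
      one_mul, mul_smul_comm, smul_smul, mul_comm]

end DiagonalForms

theorem extended_rank_two_form_hyperbolic_general
    (E : Type*) [Field E] (hchar : (2 : E) ≠ 0)
    (L : Type*) [Field L] [Algebra E L]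
    (σ : L ≃ₐ[E] L)
    (qa qb : E)
    (α γ : E) (hα : α ≠ 0) (hγ : γ ≠ 0)
    (hnorm : ∃ (z : L) (u : ℍ[E, qa, qb]), u ≠ 0 ∧
      algebraMap E L γ =
        σ z * z * algebraMap E L ((u * star u).re)) :
    (∃ x : Fin 2 → ℍ[L, algebraMap E L qa, algebraMap E L qb],
      x ≠ 0 ∧
      hermDiagTau σ (algebraMap E L qa) (algebraMap E L qb)
        ![α, -(γ * α)] x x = 0) ∧
    HermFormIsoTau (algebraMap E L qa) (algebraMap E L qb)
      (hermDiagTau σ (algebraMap E L qa) (algebraMap E L qb) ![α, -(γ * α)])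
      (hermDiagTau σ (algebraMap E L qa) (algebraMap E L qb) ![(1 : E), -1]) := by
  obtain ⟨z, u, -, hγ_norm⟩ := hnorm
  set w := z • quatBaseChange L u
  have hw : quatUnitaryInv σ w * w = algebraMap L _ (algebraMap E L γ) := by
    rw [hγ_norm, quatUnitaryInv_mul_self_smul_quatBaseChange]
  have hw' : w * quatUnitaryInv σ w = algebraMap L _ (algebraMap E L γ) := by
    rw [hγ_norm, smul_quatBaseChange_mul_quatUnitaryInv_self]
  refine ⟨⟨![w, 1], fun h => one_ne_zero (congrFun h 1), hermDiagTau_isotropic σ hw α⟩, ?_⟩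
  rw [← mul_neg]
  exact (hermFormIsoTau_diag_mul σ (σ.commutes qa) (σ.commutes qb) hγ hw hw' α (-α)).trans
    (hermFormIsoTau_neg_self σ hchar hα)

/-- **Hyperbolicity of `ρ̃(⟨α, −γα⟩)` when `γ` is a norm times a reduced norm.**
Let `E` be a field of characteristic `≠ 2`, `L = E(√d)` a quadratic extension with
nontrivial automorphism `ι`, `D₀` a quaternion division algebra over `E` with
canonical involution `τ₀` and reduced norm `Nrd`, and `D = D₀ ⊗_E L` with the
unitary involution `τ = τ₀ ⊗ ι`.  Let `h₀ = ⟨α, −γα⟩` be a rank-2 hermitian form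
over `(D₀, τ₀)` with `α, γ ∈ E*`.  If `γ ∈ N_{L/E}(L*)·Nrd(D₀*)`, then the
extension `ρ̃(h₀)` over `(D, τ)` is isotropic, hence hyperbolic. -/
theorem extended_rank_two_form_hyperbolic
    (E : Type*) [Field E] (hchar : (2 : E) ≠ 0)
    (d : E) (hd : ∀ c : E, c ^ 2 ≠ d)
    (L : Type*) [Field L] [Algebra E L]
    (s : L) (hs : s ^ 2 = algebraMap E L d)
    (σ : L ≃ₐ[E] L) (hσs : σ s = -s) (hσinv : ∀ x : L, σ (σ x) = x)
    (hbasis : ∀ x : L, ∃! p : E × E,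
      x = algebraMap E L p.1 + algebraMap E L p.2 * s)
    (qa qb : E) (hdiv : ∀ x : ℍ[E, qa, qb], x ≠ 0 → IsUnit x)
    (α γ : E) (hα : α ≠ 0) (hγ : γ ≠ 0)
    (hnorm : ∃ (z : L) (u : ℍ[E, qa, qb]), u ≠ 0 ∧
      algebraMap E L γ =
        σ z * z * algebraMap E L ((u * star u).re)) :
    (∃ x : Fin 2 → ℍ[L, algebraMap E L qa, algebraMap E L qb],
      x ≠ 0 ∧
      hermDiagTau σ (algebraMap E L qa) (algebraMap E L qb)
        ![α, -(γ * α)] x x = 0) ∧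
    HermFormIsoTau (algebraMap E L qa) (algebraMap E L qb)
      (hermDiagTau σ (algebraMap E L qa) (algebraMap E L qb) ![α, -(γ * α)])
      (hermDiagTau σ (algebraMap E L qa) (algebraMap E L qb) ![(1 : E), -1]) :=
  extended_rank_two_form_hyperbolic_general E hchar L σ qa qb α γ hα hγ hnorm
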